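/- arXiv:2302.01904 — 10 statements merged into one kernel-verified Lean document; each statement's English description precedes it below -/
import Mathlib

section
/- (Beatty's theorem) Let r > 1 be an irrational real number and let s = r/(r-1). Then the Beatty sequences B_r = {⌊n·r⌋ : n a positive integer} and B_s = {⌊n·s⌋ : n a positive integer} partition the set of positive integers: every positive integer belongs to exactly one of the two sets. -/
open scoped symmDiff

theorem mem_beattySeq_pos_iff (t : ℝ) (j : ℤ) :
    j ∈ {beattySeq t m | m > 0} ↔ ∃ n : ℕ, 0 < n ∧ j = ⌊(n : ℝ) * t⌋ := by
  constructor
  · rintro ⟨m, hm, rfl⟩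
    lift m to ℕ using hm.le
    exact ⟨m, by exact_mod_cast hm, by simp [beattySeq]⟩
  · rintro ⟨n, hn, rfl⟩
    exact ⟨n, by exact_mod_cast hn, by simp [beattySeq]⟩

/-- Beatty's theorem: for irrational `r > 1` and `s = r/(r-1)`, the Beatty sequences
`B_r = {⌊n·r⌋ : n ≥ 1}` and `B_s = {⌊n·s⌋ : n ≥ 1}` partition the positive integers. -/
theorem beatty_partition (r : ℝ) (hr_irr : Irrational r) (hr : 1 < r) (s : ℝ)
    (hs : s = r / (r - 1)) :
    ∀ k : ℕ, 0 < k →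
      Xor' (∃ n : ℕ, 0 < n ∧ (k : ℤ) = ⌊(n : ℝ) * r⌋)
           (∃ n : ℕ, 0 < n ∧ (k : ℤ) = ⌊(n : ℝ) * s⌋) := by
  intro k hk
  -- `s = r / (r - 1)` is `1 / r + 1 / s = 1`, the hypothesis of Mathlib's Rayleigh theorem
  have hrs : r.HolderConjugate s := (Real.holderConjugate_iff_eq_conjExponent hr).2 hs
  have hk_pos : (k : ℤ) ∈ {j : ℤ | 0 < j} := by simpa using hk
  rwa [← hr_irr.beattySeq_symmDiff_beattySeq_pos hrs, Set.mem_symmDiff,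
    mem_beattySeq_pos_iff, mem_beattySeq_pos_iff] at hk_pos
end

section
/- A positive integer m has a predecessor under f (i.e., there exists a positive integer n with f(n) = m) if and only if m = ⌊k·√2⌋ for some positive integer k. -/
/-- The map `f(n) = ⌊n/√2⌋` if `n` is even and `f(n) = ⌊n·√2⌋` if `n` is odd. -/
noncomputable def f (n : ℕ) : ℕ :=
  if Even n then ⌊(n : ℝ) / Real.sqrt 2⌋₊ else ⌊(n : ℝ) * Real.sqrt 2⌋₊

lemma key (j : ℕ) : ((2 * j : ℕ) : ℝ) / Real.sqrt 2 = (j : ℝ) * Real.sqrt 2 := by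
  have h2 : Real.sqrt 2 ≠ 0 := by positivity
  have h : Real.sqrt 2 * Real.sqrt 2 = 2 := Real.mul_self_sqrt (by norm_num)
  rw [div_eq_iff h2]
  push_cast
  nlinarith [h]

/-- A positive integer `m` has a predecessor under `f` iff `m = ⌊k·√2⌋` for some
positive integer `k`. -/
theorem hasPred_iff (m : ℕ) (hm : 0 < m) :
    (∃ n : ℕ, 0 < n ∧ f n = m) ↔ ∃ k : ℕ, 0 < k ∧ m = ⌊(k : ℝ) * Real.sqrt 2⌋₊ := by
  constructor
  · rintro ⟨n, hn, rfl⟩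
    rcases Nat.even_or_odd n with he | ho
    · obtain ⟨j, rfl⟩ := he
      refine ⟨j, by omega, ?_⟩
      have : j + j = 2 * j := by ring
      rw [this, f, if_pos (by exact ⟨j, by ring⟩), key]
    · exact ⟨n, hn, by rw [f, if_neg (Nat.not_even_iff_odd.mpr ho)]⟩
  · rintro ⟨k, hk, rfl⟩
    refine ⟨2 * k, by omega, ?_⟩
    rw [f, if_pos ⟨k, by ring⟩, key]
end

section
/- A positive integer m has no predecessor under f if and only if m = ⌊n·(2+√2)⌋ for some positive integer n. -/
open Real symmDiff

theorem Real.holderConjugate_sqrt_two : (√2).HolderConjugate (2 + √2) := by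
  rw [holderConjugate_iff_eq_conjExponent one_lt_sqrt_two,
    eq_div_iff (sub_ne_zero.2 one_lt_sqrt_two.ne')]
  linear_combination mul_self_sqrt (zero_le_two (α := ℝ))

theorem exists_natFloor_mul_eq_iff_mem_beattySeq {r : ℝ} (hr : 0 ≤ r) (m : ℕ) :
    (∃ n : ℕ, 0 < n ∧ ⌊n * r⌋₊ = m) ↔ (m : ℤ) ∈ {beattySeq r k | k > 0} := by
  have floor_cast (n : ℕ) : beattySeq r n = ⌊n * r⌋₊ := by
    rw [beattySeq, Int.natCast_floor_eq_floor (by positivity), Int.cast_natCast]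
  constructor
  · rintro ⟨n, hn, rfl⟩
    exact ⟨n, by exact_mod_cast hn, floor_cast n⟩
  · rintro ⟨k, hk, hkm⟩
    lift k to ℕ using hk.le
    exact ⟨k, by exact_mod_cast hk, by exact_mod_cast (floor_cast k).symm.trans hkm⟩

theorem f_two_mul (k : ℕ) : f (2 * k) = ⌊k * √2⌋₊ := by
  have hdiv : ((2 * k : ℕ) : ℝ) / √2 = k * √2 := by
    rw [div_eq_iff (by positivity)]
    push_cast
    linear_combination -(k : ℝ) * mul_self_sqrt (zero_le_two (α := ℝ))
  rw [f, if_pos (even_two_mul k), hdiv]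

theorem f_of_odd {n : ℕ} (hn : Odd n) : f n = ⌊n * √2⌋₊ := by
  rw [f, if_neg (Nat.not_even_iff_odd.2 hn)]

theorem exists_f_eq_iff (m : ℕ) :
    (∃ n : ℕ, 0 < n ∧ f n = m) ↔ ∃ k : ℕ, 0 < k ∧ ⌊k * √2⌋₊ = m := by
  constructor
  · rintro ⟨n, hn, rfl⟩
    rcases Nat.even_or_odd' n with ⟨k, rfl | rfl⟩
    · exact ⟨k, by omega, (f_two_mul k).symm⟩
    · exact ⟨2 * k + 1, hn, (f_of_odd (odd_two_mul_add_one k)).symm⟩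
  · rintro ⟨k, hk, rfl⟩
    exact ⟨2 * k, by omega, f_two_mul k⟩

/-- A positive integer `m` has no predecessor under `f` iff `m = ⌊n·(2+√2)⌋` for some
positive integer `n`. -/
theorem noPred_iff (m : ℕ) (hm : 0 < m) :
    (¬ ∃ n : ℕ, 0 < n ∧ f n = m) ↔
      ∃ n : ℕ, 0 < n ∧ m = ⌊(n : ℝ) * (2 + Real.sqrt 2)⌋₊ := by
  have hpart : (m : ℤ) ∈ {beattySeq √2 k | k > 0} ∆ {beattySeq (2 + √2) k | k > 0} := by
    rw [Irrational.beattySeq_symmDiff_beattySeq_pos holderConjugate_sqrt_two irrational_sqrt_two]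
    exact Int.natCast_pos.2 hm
  simp_rw [exists_f_eq_iff, eq_comm (a := m),
    exists_natFloor_mul_eq_iff_mem_beattySeq (sqrt_nonneg 2),
    exists_natFloor_mul_eq_iff_mem_beattySeq (by positivity : (0 : ℝ) ≤ 2 + √2)]
  rw [Set.mem_symmDiff] at hpart
  tauto
end

section
/- A positive integer m has no predecessor under f if and only if the interval [m·√2, (m+1)·√2) contains no even integer and the interval [m/√2, (m+1)/√2) contains no odd integer. -/
lemma sqrt2_pos : (0 : ℝ) < Real.sqrt 2 := Real.sqrt_pos.mpr (by norm_num)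

lemma key_s5 (m : ℕ) (hm : 0 < m) :
    (∃ n : ℕ, 0 < n ∧ f n = m) ↔
      (∃ j : ℤ, Even j ∧ (m : ℝ) * Real.sqrt 2 ≤ (j : ℝ) ∧
          (j : ℝ) < ((m : ℝ) + 1) * Real.sqrt 2) ∨
      (∃ j : ℤ, Odd j ∧ (m : ℝ) / Real.sqrt 2 ≤ (j : ℝ) ∧
          (j : ℝ) < ((m : ℝ) + 1) / Real.sqrt 2) := by
  have hs := sqrt2_pos
  constructor
  · rintro ⟨n, hn, hfn⟩
    unfold f at hfn
    by_cases h : Even n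
    · simp only [h, if_true] at hfn
      left
      have hb := (Nat.floor_eq_iff (by positivity)).mp hfn
      refine ⟨(n : ℤ), by exact_mod_cast h, ?_, ?_⟩
      · push_cast
        exact (le_div_iff₀ hs).mp hb.1
      · push_cast
        exact (div_lt_iff₀ hs).mp hb.2
    · simp only [h, if_false] at hfn
      right
      have hb := (Nat.floor_eq_iff (by positivity)).mp hfn
      refine ⟨(n : ℤ), by simpa [Int.odd_coe_nat] using Nat.not_even_iff_odd.mp h, ?_, ?_⟩
      · push_cast
        exact (div_le_iff₀ hs).mpr hb.1
      · push_cast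
        exact (lt_div_iff₀ hs).mpr hb.2
  · rintro (⟨j, hj, h1, h2⟩ | ⟨j, hj, h1, h2⟩)
    · have hjpos : 0 < j := by
        have : (0 : ℝ) < (j : ℝ) := lt_of_lt_of_le (by positivity) h1
        exact_mod_cast this
      refine ⟨j.toNat, by omega, ?_⟩
      have hcast : ((j.toNat : ℕ) : ℝ) = (j : ℝ) := by
        exact_mod_cast congrArg (Int.cast : ℤ → ℝ) (Int.toNat_of_nonneg hjpos.le)
      have heven : Even j.toNat := by
        rcases hj with ⟨k, hk⟩
        exact ⟨k.toNat, by omega⟩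
      unfold f
      simp only [heven, if_true]
      rw [hcast]
      refine (Nat.floor_eq_iff (by positivity)).mpr ⟨?_, ?_⟩
      · exact (le_div_iff₀ hs).mpr h1
      · exact (div_lt_iff₀ hs).mpr h2
    · have hjpos : 0 < j := by
        have : (0 : ℝ) < (j : ℝ) := lt_of_lt_of_le (by positivity) h1
        exact_mod_cast this
      refine ⟨j.toNat, by omega, ?_⟩
      have hcast : ((j.toNat : ℕ) : ℝ) = (j : ℝ) := by
        exact_mod_cast congrArg (Int.cast : ℤ → ℝ) (Int.toNat_of_nonneg hjpos.le)
      have hodd : ¬ Even j.toNat := by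
        rcases hj with ⟨k, hk⟩
        rintro ⟨l, hl⟩
        omega
      unfold f
      simp only [hodd, if_false]
      rw [hcast]
      refine (Nat.floor_eq_iff (by positivity)).mpr ⟨?_, ?_⟩
      · exact (div_le_iff₀ hs).mp h1
      · exact (lt_div_iff₀ hs).mp h2

/-- A positive integer `m` has no predecessor under `f` iff the interval
`[m·√2, (m+1)·√2)` contains no even integer and the interval `[m/√2, (m+1)/√2)`
contains no odd integer. -/
theorem noPred_iff_intervals (m : ℕ) (hm : 0 < m) :
    (¬ ∃ n : ℕ, 0 < n ∧ f n = m) ↔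
      (¬ ∃ j : ℤ, Even j ∧ (m : ℝ) * Real.sqrt 2 ≤ (j : ℝ) ∧
          (j : ℝ) < ((m : ℝ) + 1) * Real.sqrt 2) ∧
      (¬ ∃ j : ℤ, Odd j ∧ (m : ℝ) / Real.sqrt 2 ≤ (j : ℝ) ∧
          (j : ℝ) < ((m : ℝ) + 1) / Real.sqrt 2) := by
  rw [key_s5 m hm, not_or]
end

section
/- For every positive integer k, the number ⌊(2k-1)·√2⌋ has exactly two predecessors under f, namely 2k-1 and 4k-2; that is, {n ≥ 1 : f(n) = ⌊(2k-1)·√2⌋} = {2k-1, 4k-2}. -/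
lemma floor_mul_sqrt2_strictMono :
    StrictMono (fun j : ℕ => ⌊(j : ℝ) * Real.sqrt 2⌋₊) := by
  apply strictMono_nat_of_lt_succ
  intro j
  have h2 : (1 : ℝ) ≤ Real.sqrt 2 := by
    rw [show (1:ℝ) = Real.sqrt 1 by simp]
    exact Real.sqrt_le_sqrt (by norm_num)
  have hpos : (0 : ℝ) ≤ (j : ℝ) * Real.sqrt 2 := by positivity
  have h1 : ⌊(j : ℝ) * Real.sqrt 2⌋₊ + 1 = ⌊(j : ℝ) * Real.sqrt 2 + 1⌋₊ :=
    (Nat.floor_add_one hpos).symm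
  have h3 : (j : ℝ) * Real.sqrt 2 + 1 ≤ ((j : ℕ) + 1 : ℕ) * Real.sqrt 2 := by
    push_cast
    nlinarith
  calc ⌊(j : ℝ) * Real.sqrt 2⌋₊ < ⌊(j : ℝ) * Real.sqrt 2⌋₊ + 1 := Nat.lt_succ_self _
    _ = ⌊(j : ℝ) * Real.sqrt 2 + 1⌋₊ := h1
    _ ≤ ⌊((j + 1 : ℕ) : ℝ) * Real.sqrt 2⌋₊ := Nat.floor_le_floor (by push_cast; push_cast at h3; linarith)

lemma f_even (j : ℕ) : f (2 * j) = ⌊(j : ℝ) * Real.sqrt 2⌋₊ := by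
  have heven : Even (2 * j) := even_two_mul j
  have hs : Real.sqrt 2 ≠ 0 := by positivity
  have key : ((2 * j : ℕ) : ℝ) / Real.sqrt 2 = (j : ℝ) * Real.sqrt 2 := by
    have h : Real.sqrt 2 * Real.sqrt 2 = 2 := Real.mul_self_sqrt (by norm_num)
    push_cast
    field_simp
    nlinarith
  rw [f, if_pos heven, key]

/-- `⌊(2k-1)·√2⌋` has exactly two predecessors under `f`, namely `2k-1` and `4k-2`. -/
theorem pred_of_odd_multiple (k : ℕ) (hk : 0 < k) :
    {n : ℕ | 1 ≤ n ∧ f n = ⌊((2 * k - 1 : ℕ) : ℝ) * Real.sqrt 2⌋₊} =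
      {2 * k - 1, 4 * k - 2} := by
  set m := 2 * k - 1 with hm
  have hmodd : ¬ Even m := by
    rw [Nat.even_iff]; omega
  have hinj := floor_mul_sqrt2_strictMono.injective
  ext n
  simp only [Set.mem_setOf_eq, Set.mem_insert_iff, Set.mem_singleton_iff]
  constructor
  · rintro ⟨hn1, hfn⟩
    rcases Nat.even_or_odd n with he | ho
    · obtain ⟨j, hj⟩ := he
      right
      have : f (2 * j) = ⌊((m : ℕ) : ℝ) * Real.sqrt 2⌋₊ := by
        rw [← hfn, hj]; ring_nf
      rw [f_even] at this
      have := hinj this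
      omega
    · left
      have hne : ¬ Even n := Nat.not_even_iff_odd.mpr ho
      have : ⌊(n : ℝ) * Real.sqrt 2⌋₊ = ⌊((m : ℕ) : ℝ) * Real.sqrt 2⌋₊ := by
        rw [← hfn]; simp [f, hne]
      exact hinj this
  · rintro (rfl | rfl)
    · refine ⟨by omega, ?_⟩
      simp [f, hmodd]
    · have h42 : 4 * k - 2 = 2 * m := by omega
      refine ⟨by omega, ?_⟩
      rw [h42, f_even]
end

section
/- The map f is borderline Collatz-like: the limit lim_{n→∞} ( ∏_{r=1}^{n} f(r)/r )^{1/n} exists and equals 1. -/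
open Filter Topology Finset

theorem tendsto_const_mul_rpow_rpow_one_div {c : ℝ} (hc : 0 < c) (k : ℝ) :
    Tendsto (fun n : ℕ => (c * (n : ℝ) ^ k) ^ ((1 : ℝ) / n)) atTop (𝓝 1) := by
  have hconst : Tendsto (fun n : ℕ => c ^ ((1 : ℝ) / n)) atTop (𝓝 1) := by
    simpa [Function.comp_def] using
      (Real.continuousAt_const_rpow hc.ne').tendsto.comp tendsto_one_div_atTop_nhds_zero_nat
  have hroot : Tendsto (fun n : ℕ => ((n : ℝ) ^ ((1 : ℝ) / n)) ^ k) atTop (𝓝 1) := by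
    simpa using
      (tendsto_rpow_div.comp tendsto_natCast_atTop_atTop).rpow_const (Or.inl one_ne_zero)
  refine (one_mul (1 : ℝ) ▸ hconst.mul hroot).congr fun n => ?_
  have hn : (0 : ℝ) ≤ n := n.cast_nonneg
  rw [Real.mul_rpow hc.le (Real.rpow_nonneg hn k), ← Real.rpow_mul hn, ← Real.rpow_mul hn,
    mul_comm k]

theorem tendsto_rpow_one_div_of_le_of_le {u : ℕ → ℝ} {c C k l : ℝ} (hc : 0 < c) (hC : 0 < C)
    (hlow : ∀ᶠ n : ℕ in atTop, c * (n : ℝ) ^ k ≤ u n)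
    (hup : ∀ᶠ n : ℕ in atTop, u n ≤ C * (n : ℝ) ^ l) :
    Tendsto (fun n : ℕ => u n ^ ((1 : ℝ) / n)) atTop (𝓝 1) := by
  refine tendsto_of_tendsto_of_tendsto_of_le_of_le' (tendsto_const_mul_rpow_rpow_one_div hc k)
    (tendsto_const_mul_rpow_rpow_one_div hC l) ?_ ?_
  · filter_upwards [hlow] with n hn
    exact Real.rpow_le_rpow (by positivity) hn (by positivity)
  · filter_upwards [hlow, hup] with n hlo hn
    exact Real.rpow_le_rpow ((by positivity : 0 ≤ c * (n : ℝ) ^ k).trans hlo) hn (by positivity)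

noncomputable def fSlope (r : ℕ) : ℝ := if Even r then (√2)⁻¹ else √2

theorem f_eq_floor_mul_fSlope (r : ℕ) : f r = ⌊(r : ℝ) * fSlope r⌋₊ := by
  unfold f fSlope
  split_ifs <;> simp only [div_eq_mul_inv]

theorem fSlope_pos (r : ℕ) : 0 < fSlope r := by
  unfold fSlope
  split_ifs <;> positivity

theorem inv_sqrt_two_le_fSlope (r : ℕ) : (√2)⁻¹ ≤ fSlope r := by
  unfold fSlope
  split_ifs
  · exact le_rfl
  · exact (inv_le_one_of_one_le₀ Real.one_lt_sqrt_two.le).trans Real.one_lt_sqrt_two.le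

theorem prod_fSlope (n : ℕ) : ∏ r ∈ Icc 1 n, fSlope r = if Even n then 1 else √2 := by
  induction n with
  | zero => simp
  | succ n ih =>
    rw [prod_Icc_succ_top (by omega), ih]
    rcases Nat.even_or_odd n with hn | hn
    · have hn' : ¬Even (n + 1) := Nat.not_even_iff_odd.2 hn.add_one
      simp [fSlope, hn, hn']
    · have hn' : ¬Even n := Nat.not_even_iff_odd.2 hn
      simp [fSlope, hn', hn.add_one]

theorem one_le_prod_fSlope (n : ℕ) : 1 ≤ ∏ r ∈ Icc 1 n, fSlope r := by
  rw [prod_fSlope]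
  split_ifs
  · exact le_rfl
  · exact Real.one_lt_sqrt_two.le

theorem prod_fSlope_le_sqrt_two (n : ℕ) : ∏ r ∈ Icc 1 n, fSlope r ≤ √2 := by
  rw [prod_fSlope]
  split_ifs
  · exact Real.one_lt_sqrt_two.le
  · exact le_rfl

theorem f_div_le_fSlope (r : ℕ) : (f r : ℝ) / r ≤ fSlope r :=
  div_le_of_le_mul₀ r.cast_nonneg (fSlope_pos r).le <| by
    rw [f_eq_floor_mul_fSlope, mul_comm]
    exact Nat.floor_le (by positivity [fSlope_pos r])

theorem fSlope_mul_sq_le_f_div {r : ℕ} (hr : 2 ≤ r) :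
    fSlope r * (((r : ℝ) - 1) / r) ^ 2 ≤ f r / r := by
  have hr' : (2 : ℝ) ≤ r := by exact_mod_cast hr
  have hfloor : r * fSlope r - 1 ≤ f r := by
    rw [f_eq_floor_mul_fSlope]
    exact (Nat.sub_one_lt_floor _).le
  have hslope : (r : ℝ) ≤ fSlope r * (2 * r - 1) := by
    refine le_trans ?_ (mul_le_mul_of_nonneg_right (inv_sqrt_two_le_fSlope r) (by linarith))
    rw [← div_eq_inv_mul, le_div_iff₀ (by positivity)]
    nlinarith [Real.sqrt_two_lt_three_halves]
  rw [le_div_iff₀ (by positivity)]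
  calc fSlope r * (((r : ℝ) - 1) / r) ^ 2 * r
      = r * fSlope r - 1 - (fSlope r * (2 * r - 1) - r) / r := by field_simp; ring
    _ ≤ r * fSlope r - 1 := by
      have := div_nonneg (sub_nonneg.2 hslope) (by positivity : (0 : ℝ) ≤ r)
      linarith
    _ ≤ f r := hfloor

theorem prod_f_div_le_sqrt_two (n : ℕ) : ∏ r ∈ Icc 1 n, (f r : ℝ) / r ≤ √2 :=
  calc ∏ r ∈ Icc 1 n, (f r : ℝ) / r
      ≤ ∏ r ∈ Icc 1 n, fSlope r :=
        prod_le_prod (fun r _ => by positivity) (fun r _ => f_div_le_fSlope r)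
    _ ≤ √2 := prod_fSlope_le_sqrt_two n

theorem prod_fSlope_div_le_prod_f_div {n : ℕ} (hn : 1 ≤ n) :
    (∏ r ∈ Icc 1 n, fSlope r) / (√2 * n ^ 2) ≤ ∏ r ∈ Icc 1 n, (f r : ℝ) / r := by
  induction n, hn using Nat.le_induction with
  | base =>
    have hf1 : 1 ≤ f 1 := by
      rw [f_eq_floor_mul_fSlope, Nat.one_le_floor_iff]
      simp [fSlope, Real.one_lt_sqrt_two.le]
    simpa [fSlope] using hf1
  | succ n hn ih =>
    rw [prod_Icc_succ_top (by omega), prod_Icc_succ_top (by omega)]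
    calc (∏ r ∈ Icc 1 n, fSlope r) * fSlope (n + 1) / (√2 * ↑(n + 1) ^ 2)
        = (∏ r ∈ Icc 1 n, fSlope r) / (√2 * n ^ 2) *
            (fSlope (n + 1) * ((↑(n + 1) - 1) / ↑(n + 1)) ^ 2) := by
          push_cast
          field_simp
          ring
      _ ≤ (∏ r ∈ Icc 1 n, (f r : ℝ) / r) * (f (n + 1) / ↑(n + 1)) :=
          mul_le_mul ih (fSlope_mul_sq_le_f_div (by omega)) (by positivity [fSlope_pos (n + 1)])
            (prod_nonneg fun r _ => by positivity)

open Filter in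
/-- `f` is borderline Collatz-like:
`lim_{n→∞} (∏_{r=1}^n f(r)/r)^{1/n} = 1`. -/
theorem f_borderline_collatz_like :
    Tendsto (fun n : ℕ => (∏ r ∈ Finset.Icc 1 n, (f r : ℝ) / (r : ℝ)) ^ ((1 : ℝ) / n))
      atTop (nhds 1) := by
  refine tendsto_rpow_one_div_of_le_of_le (k := -2) (l := 0) (by positivity : (0 : ℝ) < (√2)⁻¹)
    (by positivity : (0 : ℝ) < √2) ?_ (.of_forall fun n => ?_)
  · filter_upwards [eventually_ge_atTop 1] with n hn
    calc (√2)⁻¹ * (n : ℝ) ^ (-2 : ℝ)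
        = 1 / (√2 * n ^ 2) := by
          rw [Real.rpow_neg n.cast_nonneg, Real.rpow_two, one_div, mul_inv]
      _ ≤ (∏ r ∈ Icc 1 n, fSlope r) / (√2 * n ^ 2) := by
          gcongr
          exact one_le_prod_fSlope n
      _ ≤ _ := prod_fSlope_div_le_prod_f_div hn
  · simpa using prod_f_div_le_sqrt_two n
end

section
/- If n is an even positive integer and f(n) is even, then f(f(n)) = n/2 − 1. -/
/-! For `n = 2k` we have `f n = ⌊k√2⌋`, and since `k√2` is irrational this integer `m`
satisfies `k√2 - 1 < m < k√2`. Dividing by `√2` puts `m/√2` strictly between `k - 1/√2`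
and `k`, so its floor is `k - 1`. -/

theorem Irrational.natFloor_div_natFloor_natCast_mul {a : ℝ} (ha : 1 < a) (hirr : Irrational a)
    (k : ℕ) : ⌊(⌊(k : ℝ) * a⌋₊ : ℝ) / a⌋₊ = k - 1 := by
  rcases Nat.eq_zero_or_pos k with rfl | hk
  · simp
  have ha₀ : 0 < a := by linarith
  set m := ⌊(k : ℝ) * a⌋₊
  have hm_lt : (m : ℝ) < k * a := (Nat.floor_le (by positivity)).lt_of_ne
    fun h => (hirr.natCast_mul hk.ne').ne_nat m h.symm
  have hm_gt : (k : ℝ) * a < m + 1 := Nat.lt_floor_add_one _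
  rw [Nat.floor_eq_iff (by positivity), Nat.cast_sub hk, Nat.cast_one, le_div_iff₀ ha₀,
    div_lt_iff₀ ha₀]
  constructor <;> nlinarith

theorem f_of_even {n : ℕ} (hn : Even n) : f n = ⌊(n : ℝ) / √2⌋₊ := if_pos hn

theorem f_add_self (k : ℕ) : f (k + k) = ⌊(k : ℝ) * √2⌋₊ := by
  rw [f_of_even ⟨k, rfl⟩, Nat.cast_add, ← two_mul, mul_div_assoc,
    mul_div_left_comm, Real.div_sqrt]

theorem f_f_even_even_general (n : ℕ) (hne : Even n) (hfe : Even (f n)) :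
    f (f n) = n / 2 - 1 := by
  obtain ⟨k, rfl⟩ := hne
  rw [f_of_even hfe, f_add_self,
    irrational_sqrt_two.natFloor_div_natFloor_natCast_mul Real.one_lt_sqrt_two]
  omega

/-- If `n` is an even positive integer and `f(n)` is even, then `f(f(n)) = n/2 - 1`. -/
theorem f_f_even_even (n : ℕ) (hn : 0 < n) (hne : Even n) (hfe : Even (f n)) :
    f (f n) = n / 2 - 1 :=
  f_f_even_even_general n hne hfe
end

section
/- If n is an even positive integer and f(n) is odd, then f(f(n)) ∈ {n − 2, n − 1}. -/
/-!
Write `m = ⌊n/√2⌋`. Then `n - √2 < m√2 ≤ n`, and the upper bound is strict once `m ≠ 0`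
(which oddness guarantees) because `m√2` is irrational. Hence `m√2` lies strictly between
`n - 2` and `n`, and its floor `f m` is `n - 2` or `n - 1`.
-/

open Real

lemma Nat.floor_eq_sub_two_or_sub_one {x : ℝ} {n : ℕ} (hx : 0 ≤ x) (hlo : (n : ℝ) - 2 < x)
    (hhi : x < n) : ⌊x⌋₊ = n - 2 ∨ ⌊x⌋₊ = n - 1 := by
  have hlt : ⌊x⌋₊ < n := (Nat.floor_lt hx).2 hhi
  have hgt : n < ⌊x⌋₊ + 3 := by
    have := Nat.lt_floor_add_one x
    exact_mod_cast (show (n : ℝ) < ⌊x⌋₊ + 3 by linarith)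
  omega

lemma floor_div_sqrt_two_mul_sqrt_two_le (n : ℕ) : (⌊(n : ℝ) / √2⌋₊ : ℝ) * √2 ≤ n := by
  have hs : (0 : ℝ) < √2 := by positivity
  rw [← le_div_iff₀ hs]
  exact Nat.floor_le (by positivity)

lemma sub_sqrt_two_lt_floor_div_sqrt_two_mul_sqrt_two (n : ℕ) :
    (n : ℝ) - √2 < (⌊(n : ℝ) / √2⌋₊ : ℝ) * √2 := by
  have hs : (0 : ℝ) < √2 := by positivity
  have h := mul_lt_mul_of_pos_right (Nat.lt_floor_add_one ((n : ℝ) / √2)) hs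
  rw [div_mul_cancel₀ _ hs.ne'] at h
  linarith

lemma natCast_mul_sqrt_two_ne_natCast {m : ℕ} (hm : m ≠ 0) (n : ℕ) : (m : ℝ) * √2 ≠ n :=
  (irrational_sqrt_two.natCast_mul hm).ne_nat n

theorem f_f_even_odd_general (n : ℕ) (hne : Even n) (hfo : Odd (f n)) :
    f (f n) = n - 2 ∨ f (f n) = n - 1 := by
  have hfn : f n = ⌊(n : ℝ) / √2⌋₊ := if_pos hne
  have hffn : f (f n) = ⌊(f n : ℝ) * √2⌋₊ := if_neg (Nat.not_even_iff_odd.2 hfo)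
  have hle := floor_div_sqrt_two_mul_sqrt_two_le n
  have hgt := sub_sqrt_two_lt_floor_div_sqrt_two_mul_sqrt_two n
  have hirr := natCast_mul_sqrt_two_ne_natCast hfo.pos.ne' n
  rw [hfn] at hirr
  have hs2 : √2 < 2 := by
    rw [sqrt_lt' two_pos]
    norm_num
  rw [hffn, hfn]
  exact Nat.floor_eq_sub_two_or_sub_one (by positivity) (by linarith) (lt_of_le_of_ne hle hirr)

/-- If `n` is an even positive integer and `f(n)` is odd, then `f(f(n)) ∈ {n-2, n-1}`. -/
theorem f_f_even_odd (n : ℕ) (hn : 0 < n) (hne : Even n) (hfo : Odd (f n)) :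
    f (f n) = n - 2 ∨ f (f n) = n - 1 :=
  f_f_even_odd_general n hne hfo
end

section
/- If n is an odd positive integer and f(n) is odd, then f(f(n)) ∈ {2n − 2, 2n − 1}. -/
/-- If `n` is an odd positive integer and `f(n)` is odd, then `f(f(n)) ∈ {2n-2, 2n-1}`. -/
theorem f_f_odd_odd (n : ℕ) (hn : 0 < n) (hno : Odd n) (hfo : Odd (f n)) :
    f (f n) = 2 * n - 2 ∨ f (f n) = 2 * n - 1 := by
  have h2 : (0:ℝ) < Real.sqrt 2 := by positivity
  have hs : Real.sqrt 2 * Real.sqrt 2 = 2 := Real.mul_self_sqrt (by norm_num)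
  have hslt : Real.sqrt 2 < 2 := by nlinarith
  have hne : ¬ Even n := Nat.not_even_iff_odd.mpr hno
  have hfn : f n = ⌊(n:ℝ) * Real.sqrt 2⌋₊ := by simp [f, hne]
  have hffn : f (f n) = ⌊(f n : ℝ) * Real.sqrt 2⌋₊ := by
    rw [show f (f n) = if Even (f n) then ⌊(f n : ℝ) / Real.sqrt 2⌋₊
        else ⌊(f n : ℝ) * Real.sqrt 2⌋₊ from rfl,
      if_neg (Nat.not_even_iff_odd.mpr hfo)]
  set m := f n with hm
  have hm0 : m ≠ 0 := by
    rintro h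
    rw [h] at hfo
    simp at hfo
  have hmle : (m:ℝ) ≤ n * Real.sqrt 2 := by
    rw [hfn]; exact Nat.floor_le (by positivity)
  have hmgt : (n:ℝ) * Real.sqrt 2 - 1 < m := by
    rw [hfn]
    have := Nat.lt_floor_add_one ((n:ℝ) * Real.sqrt 2)
    linarith
  have hupper : (m:ℝ) * Real.sqrt 2 < 2 * n := by
    have hle : (m:ℝ) * Real.sqrt 2 ≤ 2 * n := by nlinarith
    rcases lt_or_eq_of_le hle with h | h
    · exact h
    · exfalso
      apply irrational_sqrt_two
      refine ⟨(2 * n : ℚ) / m, ?_⟩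
      have hm0' : (m:ℝ) ≠ 0 := Nat.cast_ne_zero.mpr hm0
      push_cast
      field_simp
      linarith
  have hlower : (2 * (n:ℝ) - 2) < (m:ℝ) * Real.sqrt 2 := by nlinarith
  have hge : 2 * n - 2 ≤ f (f n) := by
    rw [hffn]
    apply Nat.le_floor
    have h1 : (2:ℕ) ≤ 2 * n := by omega
    push_cast [Nat.cast_sub h1]
    linarith
  have hlt : f (f n) < 2 * n := by
    rw [hffn]
    rw [Nat.floor_lt (by positivity)]
    push_cast
    linarith
  rw [hffn] at hge hlt ⊢ <;> omega
end

section
/- The integer 15 lies on a cycle of f of length 33: iterating f starting from 15 successively yields 21, 29, 41, 57, 80, 56, 39, 55, 77, 108, 76, 53, 74, 52, 36, 25, 35, 49, 69, 97, 137, 193, 272, 192, 135, 190, 134, 94, 66, 46, 32, 22, and then returns to 15; in particular f^∘33(15) = 15. -/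
lemma sqrt2_sq : Real.sqrt 2 * Real.sqrt 2 = 2 :=
  Real.mul_self_sqrt (by norm_num)

lemma fodd (n m : ℕ) (h : ¬Even n) (h1 : m^2 ≤ 2*n^2) (h2 : 2*n^2 < (m+1)^2) : f n = m := by
  have s2 := sqrt2_sq
  have s0 := Real.sqrt_nonneg 2
  rw [f, if_neg h]
  rw [Nat.floor_eq_iff (by positivity)]
  have h1' : (m:ℝ)^2 ≤ 2*(n:ℝ)^2 := by exact_mod_cast h1
  have h2' : 2*(n:ℝ)^2 < ((m:ℝ)+1)^2 := by exact_mod_cast h2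
  constructor
  · nlinarith [Real.sqrt_nonneg 2, mul_nonneg (Nat.cast_nonneg (α := ℝ) n) s0]
  · nlinarith [mul_nonneg (Nat.cast_nonneg (α := ℝ) n) s0]

lemma feven (n m : ℕ) (h : Even n) (h1 : 2*m^2 ≤ n^2) (h2 : n^2 < 2*(m+1)^2) : f n = m := by
  have s2 := sqrt2_sq
  have s0 : (0:ℝ) < Real.sqrt 2 := Real.sqrt_pos.mpr (by norm_num)
  rw [f, if_pos h]
  rw [Nat.floor_eq_iff (by positivity)]
  have h1' : 2*(m:ℝ)^2 ≤ (n:ℝ)^2 := by exact_mod_cast h1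
  have h2' : (n:ℝ)^2 < 2*((m:ℝ)+1)^2 := by exact_mod_cast h2
  constructor
  · rw [le_div_iff₀ s0]
    nlinarith
  · rw [div_lt_iff₀ s0]
    nlinarith [mul_nonneg (add_nonneg (Nat.cast_nonneg (α := ℝ) m) zero_le_one) s0.le]

/-- `15` lies on a cycle of `f` of length `33`. -/
theorem fifteen_on_cycle :
    f 15 = 21 ∧
    f 21 = 29 ∧
    f 29 = 41 ∧
    f 41 = 57 ∧
    f 57 = 80 ∧
    f 80 = 56 ∧
    f 56 = 39 ∧
    f 39 = 55 ∧
    f 55 = 77 ∧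
    f 77 = 108 ∧
    f 108 = 76 ∧
    f 76 = 53 ∧
    f 53 = 74 ∧
    f 74 = 52 ∧
    f 52 = 36 ∧
    f 36 = 25 ∧
    f 25 = 35 ∧
    f 35 = 49 ∧
    f 49 = 69 ∧
    f 69 = 97 ∧
    f 97 = 137 ∧
    f 137 = 193 ∧
    f 193 = 272 ∧
    f 272 = 192 ∧
    f 192 = 135 ∧
    f 135 = 190 ∧
    f 190 = 134 ∧
    f 134 = 94 ∧
    f 94 = 66 ∧
    f 66 = 46 ∧
    f 46 = 32 ∧
    f 32 = 22 ∧
    f 22 = 15 ∧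
    f^[33] 15 = 15 := by
  have steps : f 15 = 21 ∧ f 21 = 29 ∧ f 29 = 41 ∧ f 41 = 57 ∧ f 57 = 80 ∧
      f 80 = 56 ∧ f 56 = 39 ∧ f 39 = 55 ∧ f 55 = 77 ∧ f 77 = 108 ∧ f 108 = 76 ∧
      f 76 = 53 ∧ f 53 = 74 ∧ f 74 = 52 ∧ f 52 = 36 ∧ f 36 = 25 ∧ f 25 = 35 ∧
      f 35 = 49 ∧ f 49 = 69 ∧ f 69 = 97 ∧ f 97 = 137 ∧ f 137 = 193 ∧ f 193 = 272 ∧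
      f 272 = 192 ∧ f 192 = 135 ∧ f 135 = 190 ∧ f 190 = 134 ∧ f 134 = 94 ∧
      f 94 = 66 ∧ f 66 = 46 ∧ f 46 = 32 ∧ f 32 = 22 ∧ f 22 = 15 := by
    refine ⟨?_, ?_, ?_, ?_, ?_, ?_, ?_, ?_, ?_, ?_, ?_, ?_, ?_, ?_, ?_, ?_, ?_,
      ?_, ?_, ?_, ?_, ?_, ?_, ?_, ?_, ?_, ?_, ?_, ?_, ?_, ?_, ?_, ?_⟩ <;>
    first
      | (apply fodd <;> decide)
      | (apply feven <;> decide)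
  obtain ⟨h1,h2,h3,h4,h5,h6,h7,h8,h9,h10,h11,h12,h13,h14,h15,h16,h17,h18,h19,h20,
    h21,h22,h23,h24,h25,h26,h27,h28,h29,h30,h31,h32,h33⟩ := steps
  refine ⟨h1,h2,h3,h4,h5,h6,h7,h8,h9,h10,h11,h12,h13,h14,h15,h16,h17,h18,h19,h20,
    h21,h22,h23,h24,h25,h26,h27,h28,h29,h30,h31,h32,h33, ?_⟩
  show f^[33] 15 = 15
  simp only [Function.iterate_succ, Function.iterate_zero, Function.comp_apply, id_eq,
    h1,h2,h3,h4,h5,h6,h7,h8,h9,h10,h11,h12,h13,h14,h15,h16,h17,h18,h19,h20,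
    h21,h22,h23,h24,h25,h26,h27,h28,h29,h30,h31,h32,h33]
end
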